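/- (The observability-constrained Schmidt invariant Kalman filter preserves the ten-dimensional unobservable subspace.) Fix g, p_F ∈ ℝ³ with g ≠ 0 and a first-estimate matrix R̂_{G0} ∈ ℝ^{3×3}. Then the 33×10 matrix N*₃ has rank 10, so N*₃ᵀ N*₃ is invertible. Let T ∈ ℕ, δ₁, …, δ_T ∈ ℝ, and for each t ∈ {0, …, T} let R̂_{I,t}, R̂_{G,t}, R_{KF} ∈ ℝ^{3×3}, v̂_t, p̂_{I,t}, p̂_{f,t}, p̂_{G,t} ∈ ℝ³ and J_t, J'_t, J*_t ∈ ℝ^{2×3} be arbitrary. Define A*_t with the step-t estimates, Φ*_{t|0} = exp(δ_t A*_t) ⋯ exp(δ₁ A*₁) (Φ*_{0|0} = I), H_{L,t} = −J_t R̂_{I,t}ᵀ [0₃ 0₃ I₃ −I₃ 0₃ 0₃ 0₃ 0₃ 0₃ 0₃ 0₃], H^C_t = −J'_t R̂_{I,t}ᵀ [−(R̂_{G,t} p_F)_× 0₃ I₃ 0₃ −I₃ (R̂_{G,t} p_F)_× 0₃ 0₃ 0₃ 0₃ −R̂_{G,t}], H^{KF}_t = −J*_t R_{KF}ᵀ [0₃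 0₃ 0₃ 0₃ 0₃ 0₃ 0₃ 0₃ −(p_F)_× I₃ −I₃], and the observability-constrained modified Jacobian H^{C*}_t = H^C_t − H^C_t N*₃ (N*₃ᵀ N*₃)⁻¹ N*₃ᵀ. Then for every t: H_{L,t} Φ*_{t|0} N*₃ = 0, H^{C*}_t Φ*_{t|0} N*₃ = 0, and H^{KF}_t Φ*_{t|0} N*₃ = 0; i.e., all block rows of the observability matrix built from the modified Jacobians annihilate N*₃, so the ten unobservable directions are preserved for arbitrary (ever-changing) estimates. -/

import Mathlib

open Matrix

abbrev V3 := Fin 3 → ℝ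
abbrev M3 := Matrix (Fin 3) (Fin 3) ℝ

/-- The cross-product (skew-symmetric) matrix `(a)_×`. -/
def skew (a : V3) : M3 :=
  !![0, -a 2, a 1; a 2, 0, -a 0; -a 1, a 0, 0]

/-- Row/column index of the 33-dimensional right-invariant error
`(ξ_θ, ξ_v, ξ_p, ξ_pf, ξ_pG, ξ_θG, ξ_bg, ξ_ba, ξ_θKF, ξ_pKF, ξ_F)`: 11 blocks of 3. -/
abbrev Idx33 := Fin 11 × Fin 3

/-- Column index for the 33×10 unobservable-direction matrix:
one single column followed by three 3-column blocks. -/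
abbrev Cols10 := Fin 1 ⊕ Fin 3 × Fin 3

/-- 33×33 matrix from an 11×11 table of 3×3 blocks. -/
def bm11 (f : Fin 11 → Fin 11 → M3) : Matrix Idx33 Idx33 ℝ :=
  Matrix.of fun p q => f p.1 q.1 p.2 q.2

/-- The 33×33 propagation matrix `A*` of the imperfect augmented system:
the upper-left 24×24 block is the perfect-system propagation matrix,
all other entries are zero. -/
def AStar (g : V3) (RI : M3) (v pI pf pG : V3) : Matrix Idx33 Idx33 ℝ :=
  bm11 ![![0, 0, 0, 0, 0, 0, -RI, 0, 0, 0, 0],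
         ![skew g, 0, 0, 0, 0, 0, -(skew v * RI), -RI, 0, 0, 0],
         ![0, 1, 0, 0, 0, 0, -(skew pI * RI), 0, 0, 0, 0],
         ![0, 0, 0, 0, 0, 0, -(skew pf * RI), 0, 0, 0, 0],
         ![0, 0, 0, 0, 0, 0, -(skew pG * RI), 0, 0, 0, 0],
         ![0, 0, 0, 0, 0, 0, 0, 0, 0, 0, 0],
         ![0, 0, 0, 0, 0, 0, 0, 0, 0, 0, 0],
         ![0, 0, 0, 0, 0, 0, 0, 0, 0, 0, 0],
         ![0, 0, 0, 0, 0, 0, 0, 0, 0, 0, 0],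
         ![0, 0, 0, 0, 0, 0, 0, 0, 0, 0, 0],
         ![0, 0, 0, 0, 0, 0, 0, 0, 0, 0, 0]]

/-- The 33×10 unobservable-direction matrix `N*₁` (parametric in `R_G`; `N*₃` is the
same matrix evaluated at the first-estimate `R̂_{G0}`). -/
def NStar1 (g pF : V3) (RG : M3) : Matrix Idx33 Cols10 ℝ :=
  Matrix.of fun p j =>
    Sum.elim
      (fun _ => (![g, 0, 0, 0, 0, g, 0, 0, 0, 0, 0] : Fin 11 → V3) p.1 p.2)
      (fun q =>
        (![![0, 0, 0], ![0, 0, 0], ![1, 0, 0], ![1, 0, 0], ![1, -RG, 0],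
           ![0, 0, 1], ![0, 0, 0], ![0, 0, 0], ![0, 0, -RGᵀ], ![0, 1, 0],
           ![0, 1, skew pF * RGᵀ]] : Fin 11 → Fin 3 → M3) p.1 q.1 p.2 q.2) j

/-- A 2×33 measurement Jacobian `B ⬝ [f₀ ⋯ f₁₀]` from a 2×3 factor `B`
and an 11-tuple of 3×3 blocks. -/
def rowJac (B : Matrix (Fin 2) (Fin 3) ℝ) (f : Fin 11 → M3) : Matrix (Fin 2) Idx33 ℝ :=
  Matrix.of fun r p => (B * f p.1) r p.2

/-- The state-transition matrix `Φ*_{t|0} = exp(δ_t A*_t) ⋯ exp(δ₁ A*₁)`, `Φ*_{0|0} = I`. -/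
noncomputable def PhiStar (δ : ℕ → ℝ) (As : ℕ → Matrix Idx33 Idx33 ℝ) :
    ℕ → Matrix Idx33 Idx33 ℝ
  | 0 => 1
  | t + 1 => NormedSpace.exp (δ (t + 1) • As (t + 1)) * PhiStar δ As t

/-!
Whatever the estimates, `A*` annihilates `N*₃`: the only nonzero block rows of `A*` meet the
columns of `N*₃` in `(g)_× g = 0` or in cancelling identity blocks. Hence every factor
`exp (δ A*) = 1 + δ A* + ⋯` fixes `N*₃`, and so does `Φ*_{t|0}`. The feature and keyframe
Jacobians kill `N*₃` by a block computation, the modified Jacobian by construction, since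
`1 - N (Nᵀ N)⁻¹ Nᵀ` kills the columns of `N`. Finally `N*₃` is injective (its `θ`, `p`, `pKF`
and `θG` block rows read off the coordinates, using `g ≠ 0`), so its Gram matrix is positive
definite and its rank is 10.
-/

lemma Matrix.exp_mul_eq_self_of_mul_eq_zero {n m : Type*} [Fintype n]
    [DecidableEq n] [Fintype m] {M : Matrix n n ℝ} {B : Matrix n m ℝ} (h : M * B = 0) :
    NormedSpace.exp M * B = B := by
  -- `NormedSpace.exp` only depends on the topology; any algebra norm exposes its power series.
  let : NormedRing (Matrix n n ℝ) := Matrix.linftyOpNormedRing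
  let : NormedAlgebra ℝ (Matrix n n ℝ) := Matrix.linftyOpNormedAlgebra
  let mulRightB : Matrix n n ℝ →L[ℝ] Matrix n m ℝ :=
    { toFun := (· * B)
      map_add' := (Matrix.add_mul · · B)
      map_smul' := (Matrix.smul_mul · · B)
      cont := continuous_id.matrix_mul continuous_const }
  have hterm : ∀ k : ℕ, mulRightB ((k.factorial⁻¹ : ℝ) • M ^ k) = if k = 0 then B else 0 := by
    rintro (_ | k)
    · simp [mulRightB]
    · simp [mulRightB, pow_succ, Matrix.mul_assoc, h]
  have hsum := (NormedSpace.exp_series_hasSum_exp' (𝕂 := ℝ) M).mapL mulRightB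
  simp only [hterm] at hsum
  exact hsum.unique (hasSum_ite_eq 0 B)

lemma PhiStar_mul_eq_self {ι : Type*} [Fintype ι] (δ : ℕ → ℝ) {As : ℕ → Matrix Idx33 Idx33 ℝ}
    {N : Matrix Idx33 ι ℝ} (h : ∀ s, As s * N = 0) (t : ℕ) : PhiStar δ As t * N = N := by
  induction t with
  | zero => simp [PhiStar]
  | succ t ih =>
    rw [PhiStar, Matrix.mul_assoc, ih,
      Matrix.exp_mul_eq_self_of_mul_eq_zero (by rw [Matrix.smul_mul, h, smul_zero])]

lemma Matrix.sub_mul_gram_inv_mul_transpose_mul_self {R k m n : Type*} [CommRing R]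
    [Fintype m] [Fintype n] [DecidableEq n] (H : Matrix k m R) (N : Matrix m n R)
    (hN : IsUnit (Nᵀ * N)) : (H - H * N * (Nᵀ * N)⁻¹ * Nᵀ) * N = 0 := by
  rw [Matrix.sub_mul, Matrix.mul_assoc _ Nᵀ, Matrix.mul_assoc _ (Nᵀ * N)⁻¹,
    Matrix.nonsing_inv_mul _ ((isUnit_iff_isUnit_det _).mp hN), Matrix.mul_one, sub_self]

lemma Matrix.isUnit_transpose_mul_self {m n : Type*} [Fintype m] [Fintype n] [DecidableEq n]
    {N : Matrix m n ℝ} (hN : Function.Injective N.mulVec) : IsUnit (Nᵀ * N) := by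
  simpa using (Matrix.PosDef.conjTranspose_mul_self N hN).isUnit

lemma Matrix.rank_eq_card_of_injective {m n : Type*} [Fintype m] [Fintype n] [DecidableEq n]
    {N : Matrix m n ℝ} (hN : Function.Injective N.mulVec) : N.rank = Fintype.card n := by
  rw [← Matrix.rank_transpose_mul_self, Matrix.rank_of_isUnit _ (isUnit_transpose_mul_self hN)]

def colBlocks (c : Fin 11 → V3) (D : Fin 11 → Fin 3 → M3) : Matrix Idx33 Cols10 ℝ :=
  Matrix.of fun p j => Sum.elim (fun _ => c p.1 p.2) (fun q => D p.1 q.1 p.2 q.2) j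

def blockRow (f : Fin 11 → M3) : Matrix (Fin 3) Idx33 ℝ :=
  Matrix.of fun i p => f p.1 i p.2

lemma rowJac_eq_mul_blockRow (B : Matrix (Fin 2) (Fin 3) ℝ) (f : Fin 11 → M3) :
    rowJac B f = B * blockRow f := by
  ext r ⟨p, i⟩
  simp [rowJac, blockRow, Matrix.mul_apply]

lemma blockRow_mul_colBlocks_eq_zero {f : Fin 11 → M3} {c : Fin 11 → V3}
    {D : Fin 11 → Fin 3 → M3} (hc : ∑ p, f p *ᵥ c p = 0) (hD : ∀ r, ∑ p, f p * D p r = 0) :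
    blockRow f * colBlocks c D = 0 := by
  ext i (j | ⟨r, k⟩)
  · simpa [blockRow, colBlocks, Matrix.mul_apply, Fintype.sum_prod_type, Matrix.mulVec,
      dotProduct] using congrFun hc i
  · simpa [blockRow, colBlocks, Matrix.mul_apply, Fintype.sum_prod_type, Matrix.sum_apply]
      using congrFun (congrFun (hD r) i) k

lemma rowJac_mul_colBlocks_eq_zero (B : Matrix (Fin 2) (Fin 3) ℝ) {f : Fin 11 → M3}
    {c : Fin 11 → V3} {D : Fin 11 → Fin 3 → M3} (hc : ∑ p, f p *ᵥ c p = 0)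
    (hD : ∀ r, ∑ p, f p * D p r = 0) : rowJac B f * colBlocks c D = 0 := by
  rw [rowJac_eq_mul_blockRow, Matrix.mul_assoc, blockRow_mul_colBlocks_eq_zero hc hD,
    Matrix.mul_zero]

lemma bm11_mul_colBlocks_eq_zero {F : Fin 11 → Fin 11 → M3} {c : Fin 11 → V3}
    {D : Fin 11 → Fin 3 → M3} (hc : ∀ p, ∑ q, F p q *ᵥ c q = 0)
    (hD : ∀ p r, ∑ q, F p q * D q r = 0) : bm11 F * colBlocks c D = 0 := by
  ext ⟨p, i⟩ (j | ⟨r, k⟩)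
  · simpa [bm11, colBlocks, Matrix.mul_apply, Fintype.sum_prod_type, Matrix.mulVec,
      dotProduct] using congrFun (hc p) i
  · simpa [bm11, colBlocks, Matrix.mul_apply, Fintype.sum_prod_type, Matrix.sum_apply]
      using congrFun (congrFun (hD p r) i) k

lemma colBlocks_mulVec_apply (c : Fin 11 → V3) (D : Fin 11 → Fin 3 → M3) (x : Cols10 → ℝ)
    (p : Fin 11) (i : Fin 3) :
    (colBlocks c D *ᵥ x) (p, i) =
      c p i * x (.inl 0) + ∑ r, (D p r *ᵥ fun k => x (.inr (r, k))) i := by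
  simp [colBlocks, Matrix.mulVec, dotProduct, Fintype.sum_sum_type, Fintype.sum_prod_type]

lemma NStar1_eq_colBlocks (g pF : V3) (RG : M3) :
    NStar1 g pF RG = colBlocks ![g, 0, 0, 0, 0, g, 0, 0, 0, 0, 0]
      ![![0, 0, 0], ![0, 0, 0], ![1, 0, 0], ![1, 0, 0], ![1, -RG, 0],
        ![0, 0, 1], ![0, 0, 0], ![0, 0, 0], ![0, 0, -RGᵀ], ![0, 1, 0],
        ![0, 1, skew pF * RGᵀ]] := rfl

lemma skew_mulVec_self (a : V3) : skew a *ᵥ a = 0 := by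
  ext i
  fin_cases i <;> simp [skew, Matrix.mulVec, dotProduct, Fin.sum_univ_three] <;> ring

lemma AStar_mul_NStar1 (g pF : V3) (RG RI : M3) (v pI pf pG : V3) :
    AStar g RI v pI pf pG * NStar1 g pF RG = 0 := by
  refine bm11_mul_colBlocks_eq_zero (fun p => ?_) (fun p r => ?_)
  · fin_cases p <;> simp [Fin.sum_univ_succ, skew_mulVec_self]
  · fin_cases p <;> fin_cases r <;> simp [Fin.sum_univ_succ]

lemma rowJac_positionDiff_mul_NStar1 (B : Matrix (Fin 2) (Fin 3) ℝ) (g pF : V3) (RG : M3) :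
    rowJac B ![0, 0, 1, -1, 0, 0, 0, 0, 0, 0, 0] * NStar1 g pF RG = 0 := by
  refine rowJac_mul_colBlocks_eq_zero B ?_ fun r => ?_
  · simp [Fin.sum_univ_succ]
  · fin_cases r <;> simp [Fin.sum_univ_succ]

lemma rowJac_keyframe_mul_NStar1 (B : Matrix (Fin 2) (Fin 3) ℝ) (g pF : V3) (RG : M3) :
    rowJac B ![0, 0, 0, 0, 0, 0, 0, 0, -skew pF, 1, -1] * NStar1 g pF RG = 0 := by
  refine rowJac_mul_colBlocks_eq_zero B ?_ fun r => ?_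
  · simp [Fin.sum_univ_succ]
  · fin_cases r <;> simp [Fin.sum_univ_succ]

lemma NStar1_mulVec_injective {g : V3} (hg : g ≠ 0) (pF : V3) (RG : M3) :
    Function.Injective (NStar1 g pF RG).mulVec := by
  refine (injective_iff_map_eq_zero (NStar1 g pF RG).mulVecLin).2 fun x hx => ?_
  have row (p : Fin 11) (i : Fin 3) := congrFun hx (p, i)
  simp only [mulVecLin_apply, NStar1_eq_colBlocks, colBlocks_mulVec_apply, Fin.sum_univ_three,
    Pi.zero_apply] at row
  obtain ⟨i₀, hi₀⟩ := Function.ne_iff.mp hg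
  have hθ : x (.inl 0) = 0 := (mul_eq_zero.mp (by simpa using row 0 i₀)).resolve_left hi₀
  ext (j | ⟨r, k⟩)
  · rwa [Subsingleton.elim j 0]
  · fin_cases r
    · simpa using row 2 k
    · simpa using row 9 k
    · simpa [hθ] using row 5 k

/-- The MSOC-S-IKF preserves the ten-dimensional unobservable subspace: with
`N*₃ = N*₁(R̂_{G0})` of rank 10 (so `N*₃ᵀ N*₃` is invertible), all block rows of the
observability matrix built from the observability-constrained modified Jacobians
annihilate `N*₃`, for arbitrary ever-changing estimates. -/
theorem msoc_s_ikf_preserves_unobservable_subspace (g pF : V3) (hg : g ≠ 0)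
    (RG0 : M3) (T : ℕ) (δ : ℕ → ℝ) (RI RG RKF : ℕ → M3) (v pI pf pG : ℕ → V3)
    (J J' Jstar : ℕ → Matrix (Fin 2) (Fin 3) ℝ) :
    (NStar1 g pF RG0).rank = 10 ∧
    IsUnit ((NStar1 g pF RG0)ᵀ * NStar1 g pF RG0) ∧
    ∀ t ≤ T,
      rowJac (-(J t * (RI t)ᵀ)) ![0, 0, 1, -1, 0, 0, 0, 0, 0, 0, 0] *
          PhiStar δ (fun s => AStar g (RI s) (v s) (pI s) (pf s) (pG s)) t *
          NStar1 g pF RG0 = 0 ∧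
      (rowJac (-(J' t * (RI t)ᵀ))
            ![-skew (RG t *ᵥ pF), 0, 1, 0, -1, skew (RG t *ᵥ pF), 0, 0, 0, 0,
              -(RG t)] -
          rowJac (-(J' t * (RI t)ᵀ))
              ![-skew (RG t *ᵥ pF), 0, 1, 0, -1, skew (RG t *ᵥ pF), 0, 0, 0, 0,
                -(RG t)] *
            NStar1 g pF RG0 * ((NStar1 g pF RG0)ᵀ * NStar1 g pF RG0)⁻¹ *
            (NStar1 g pF RG0)ᵀ) *
          PhiStar δ (fun s => AStar g (RI s) (v s) (pI s) (pf s) (pG s)) t *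
          NStar1 g pF RG0 = 0 ∧
      rowJac (-(Jstar t * (RKF t)ᵀ))
            ![0, 0, 0, 0, 0, 0, 0, 0, -skew pF, 1, -1] *
          PhiStar δ (fun s => AStar g (RI s) (v s) (pI s) (pf s) (pG s)) t *
          NStar1 g pF RG0 = 0 := by
  have hinj := NStar1_mulVec_injective hg pF RG0
  have hunit := Matrix.isUnit_transpose_mul_self hinj
  have hPhi := PhiStar_mul_eq_self δ fun s =>
    AStar_mul_NStar1 g pF RG0 (RI s) (v s) (pI s) (pf s) (pG s)
  refine ⟨Matrix.rank_eq_card_of_injective hinj, hunit, fun t _ => ?_⟩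
  simp only [Matrix.mul_assoc _ (PhiStar _ _ t), hPhi t]
  exact ⟨rowJac_positionDiff_mul_NStar1 _ g pF RG0,
    Matrix.sub_mul_gram_inv_mul_transpose_mul_self _ _ hunit,
    rowJac_keyframe_mul_NStar1 _ g pF RG0⟩
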